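/- Let S be a finite linearly ordered set and σ : S → S a bijection. With δ_I(x) defined as δ_I(x) = (−1)^{pos_{σ(I)}(σ(x)) − pos_I(x)} (positions taken within the induced orders), there exists a unique function ε from the subsets of S to {±1} such that ε(∅) = 1 and ε(I) = δ_I(x) · ε(I∖{x}) for every nonempty I ⊆ S and every x ∈ I. -/

import Mathlib

/-!
Take `ε(I) = (-1)^inv(I)`, where `inv(I)` counts the pairs of `I` whose order `σ` reverses.
Removing `x ∈ I` loses the pairs through `x`: the `y < x` with `σ x < σ y` and the `y > x` with
`σ y < σ x`, say `p` and `q` of them. Counting the elements below `x` and below `σ x` gives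
`pos_I(x) = c + p + 1` and `pos_{σ(I)}(σ(x)) = c + q + 1`, so `δ_I(x) = (-1)^(q - p)`, which is
`(-1)^(p + q) = ε(I) ε(I∖{x})`. Uniqueness is induction on `I`.
-/

/-- The position of `x` within the subset `I`: `pos_I(x) = |{y ∈ I : y ≤ x}|`. -/
def posIn {S : Type} [LinearOrder S] (I : Finset S) (x : S) : ℕ :=
  (I.filter (fun y => y ≤ x)).card

/-- The sign `δ_I(x) = (−1)^(pos_{σ(I)}(σ(x)) − pos_I(x))`. -/
def deltaSign {S : Type} [LinearOrder S] (σ : S ≃ S)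
    (I : Finset S) (x : S) : ℤˣ :=
  (-1 : ℤˣ) ^ ((posIn (I.image σ) (σ x) : ℤ) - (posIn I x : ℤ))

open Finset

lemma Int.negOnePow_card_sub_card {α : Type*} [DecidableEq α] (A B : Finset α) :
    Int.negOnePow (#B - #A) = Int.negOnePow (#(A \ B) + #(B \ A)) := by
  rw [Int.negOnePow_eq_iff]
  have hA := card_sdiff_add_card_inter A B
  have hB := card_sdiff_add_card_inter B A
  rw [inter_comm] at hB
  exact ⟨-#(A \ B), by omega⟩

section Inversions

variable {S T : Type} [LinearOrder S] [LinearOrder T]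

lemma posIn_insert_self {J : Finset S} {x : S} (hx : x ∉ J) :
    posIn (insert x J) x = #{y ∈ J | y < x} + 1 := by
  rw [posIn, filter_insert, if_pos le_rfl, card_insert_of_notMem (by simp [hx])]
  congr 2
  exact filter_congr fun y hy => (ne_of_mem_of_not_mem hy hx).le_iff_lt

lemma posIn_image_insert_self {f : S → T} (hf : Function.Injective f) {J : Finset S} {x : S}
    (hx : x ∉ J) : posIn ((insert x J).image f) (f x) = #{y ∈ J | f y < f x} + 1 := by
  rw [image_insert, posIn_insert_self (by simpa [hf.eq_iff] using hx), filter_image,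
    card_image_of_injective _ hf]

def invCount (f : S → T) (I : Finset S) : ℕ :=
  ∑ a ∈ I, #{b ∈ I | b < a ∧ f a < f b}

lemma invCount_insert {f : S → T} (hf : Function.Injective f) {J : Finset S} {x : S}
    (hx : x ∉ J) :
    invCount f (insert x J) = invCount f J + #({y ∈ J | y < x} \ {y ∈ J | f y < f x})
      + #({y ∈ J | f y < f x} \ {y ∈ J | y < x}) := by
  have hne : ∀ y ∈ J, y ≠ x := fun y hy => ne_of_mem_of_not_mem hy hx
  have below_x : #{b ∈ insert x J | b < x ∧ f x < f b}
      = #({y ∈ J | y < x} \ {y ∈ J | f y < f x}) := by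
    rw [← filter_and_not, filter_insert, if_neg (by simp)]
    congr 1
    refine filter_congr fun y hy => and_congr_right fun _ => ?_
    rw [not_lt, (hf.ne (hne y hy)).symm.le_iff_lt]
  have above_x : ∀ a ∈ J, #{b ∈ insert x J | b < a ∧ f a < f b}
      = #{b ∈ J | b < a ∧ f a < f b} + if x < a ∧ f a < f x then 1 else 0 := by
    intro a _
    rw [filter_insert]
    split_ifs
    · exact card_insert_of_notMem fun hmem => hx (mem_filter.mp hmem).1
    · rfl
  have count_above : #{a ∈ J | x < a ∧ f a < f x}
      = #({y ∈ J | f y < f x} \ {y ∈ J | y < x}) := by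
    rw [← filter_and_not]
    congr 1
    refine filter_congr fun y hy => ?_
    rw [and_comm, not_lt, (hne y hy).symm.le_iff_lt]
  rw [invCount, sum_insert hx, below_x, sum_congr rfl above_x, sum_add_distrib, sum_boole,
    Nat.cast_id, count_above, invCount]
  ring

end Inversions

section InversionSign

variable {S : Type} [LinearOrder S] (σ : S ≃ S)

def inversionSign (I : Finset S) : ℤˣ :=
  Int.negOnePow (invCount σ I)

lemma inversionSign_empty : inversionSign σ ∅ = 1 := by
  simp [inversionSign, invCount]

lemma inversionSign_insert {J : Finset S} {x : S} (hx : x ∉ J) :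
    inversionSign σ (insert x J) = deltaSign σ (insert x J) x * inversionSign σ J := by
  rw [deltaSign, ← Int.negOnePow_def, inversionSign, inversionSign,
    posIn_image_insert_self σ.injective hx, posIn_insert_self hx, invCount_insert σ.injective hx]
  push_cast
  rw [add_sub_add_right_eq_sub, Int.negOnePow_card_sub_card, ← Int.negOnePow_add]
  congr 1
  ring

lemma inversionSign_eq_deltaSign_mul {I : Finset S} {x : S} (hx : x ∈ I) :
    inversionSign σ I = deltaSign σ I x * inversionSign σ (I.erase x) := by
  simpa only [insert_erase hx] using inversionSign_insert σ (notMem_erase x I)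

end InversionSign

theorem exists_unique_epsilon_general {S : Type} [LinearOrder S] (σ : S ≃ S) :
    ∃! ε : Finset S → ℤˣ, ε ∅ = 1 ∧
      ∀ (I : Finset S) (x : S), x ∈ I → ε I = deltaSign σ I x * ε (I.erase x) := by
  refine ⟨inversionSign σ,
    ⟨inversionSign_empty σ, fun I x hx => inversionSign_eq_deltaSign_mul σ hx⟩, ?_⟩
  rintro ε ⟨hε_empty, hε_erase⟩
  funext I
  induction I using Finset.induction_on with
  | empty => rw [hε_empty, inversionSign_empty]
  | insert a s ha ih =>
    rw [hε_erase _ a (mem_insert_self a s), erase_insert ha, ih, inversionSign_insert σ ha]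

/-- There exists a unique sign function `ε` on subsets of `S` with `ε(∅) = 1` and
`ε(I) = δ_I(x)·ε(I∖{x})` for every nonempty `I` and `x ∈ I`. -/
theorem exists_unique_epsilon {S : Type} [LinearOrder S] [Fintype S] (σ : S ≃ S) :
    ∃! ε : Finset S → ℤˣ, ε ∅ = 1 ∧
      ∀ (I : Finset S) (x : S), x ∈ I → ε I = deltaSign σ I x * ε (I.erase x) :=
  exists_unique_epsilon_general σ
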